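/- Define for φ ∈ 𝒢₀[n] and f ∈ F_m: φ • f := Σ_{i=1}^{m} (φ^{i,…,i+n−1} − φ^{i+1,…,i+n}) f^{1,…,i−1,(i⋯i+n),i+n+1,…,n+m} − φ^{1,…,n} f^{n+1,…,n+m} + φ^{n+1,…,n+m} f^{1,…,m}. This formula defines a Lie module structure of the graded Lie algebra 𝒢₀ on F = ⊕_{m≥0} F_m, i.e. (φ•(ψ•f)) − (ψ•(φ•f)) = [φ,ψ]₀ • f for the bracket [·,·]₀ of 𝒢₀. -/

import Mathlib

/-!
We work in the commutative ring `(ℕ → ℂ) → ℂ`, on which `shiftArg a` and `mergeArg i L` act by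
precomposition, hence as ring endomorphisms. Expanding `φ • (ψ • f)`, every term merges blocks of
arguments of `f` for `φ` and for `ψ`. The terms in which the two blocks are disjoint are symmetric
in `φ` and `ψ` (`disjointMerges_comm`) and cancel in the commutator. The terms in which `φ` is
merged inside the block of `ψ` are shifts of `mergeSum n (m + 1) φ (ψ - shiftArg 1 ψ)`, and the
antisymmetrisation of this function telescopes to `Br0 n m φ ψ - shiftArg 1 (Br0 n m φ ψ)`
(`shiftDiff_br0`), which reassembles the sum part of `[φ, ψ]₀ • f`. The remaining boundary terms
match by a ring identity.
-/

/-- Functional model: an element of `𝒢₀[n]` or `F_n` is represented by a function of the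
variables `x₁, x₂, …` (indexed from `0`) depending on its first `n` arguments.
`shiftArg i g` is `g^{i+1,…,i+n}`: `g` evaluated at `x_{i+1}, x_{i+2}, …`. -/
def shiftArg (i : ℕ) (g : (ℕ → ℂ) → ℂ) : (ℕ → ℂ) → ℂ :=
  fun x => g (fun j => x (j + i))

/-- `mergeArg i L g`: `g` with the `L` consecutive variables `x_{i+1},…,x_{i+L}`
(0-indexed position `i`) replaced by their sum. -/
noncomputable def mergeArg (i L : ℕ) (g : (ℕ → ℂ) → ℂ) : (ℕ → ℂ) → ℂ :=
  fun x => g (fun j =>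
    if j < i then x j
    else if j = i then ∑ t ∈ Finset.range L, x (i + t)
    else x (j + L - 1))

/-- `g` depends only on its first `p` arguments. -/
def Arity (p : ℕ) (g : (ℕ → ℂ) → ℂ) : Prop :=
  ∀ x y : ℕ → ℂ, (∀ j, j < p → x j = y j) → g x = g y

/-- Invariance of `φ ∈ ℂ[x₁,…,xₙ][(x₁⋯xₙ(x₁+⋯+xₙ))⁻¹]` under the cyclic group `C_{n+1}`
acting via the identification with `ℂ[x₁,…,x_{n+1}]/(x₁+⋯+x_{n+1})`:
`φ(x₁,…,xₙ) = φ(x₂,…,xₙ,−(x₁+⋯+xₙ))`. -/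
def CycInv (n : ℕ) (φ : (ℕ → ℂ) → ℂ) : Prop :=
  ∀ x : ℕ → ℂ,
    φ x = φ (fun j => if j = n - 1 then -(∑ i ∈ Finset.range n, x i) else x (j + 1))

/-- The action `φ • f` of `φ ∈ 𝒢₀[n]` on `f ∈ F_m`:
`φ • f = Σ_{i=1}^{m}(φ^{i,…,i+n−1} − φ^{i+1,…,i+n}) f^{1,…,i−1,(i⋯i+n),i+n+1,…,n+m}
− φ^{1,…,n} f^{n+1,…,n+m} + φ^{m+1,…,n+m} f^{1,…,m}`. -/
noncomputable def Act (n m : ℕ) (φ f : (ℕ → ℂ) → ℂ) : (ℕ → ℂ) → ℂ :=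
  fun x =>
    (∑ i ∈ Finset.range m, (shiftArg i φ x - shiftArg (i + 1) φ x) * mergeArg i (n + 1) f x)
    - shiftArg 0 φ x * shiftArg n f x + shiftArg m φ x * shiftArg 0 f x

/-- The bracket `[φ,ψ]₀` of `𝒢₀`, for `φ` of `n` arguments and `ψ` of `m` arguments. -/
noncomputable def Br0 (n m : ℕ) (φ ψ : (ℕ → ℂ) → ℂ) : (ℕ → ℂ) → ℂ :=
  fun x =>
    (∑ i ∈ Finset.range m, (shiftArg i φ x - shiftArg (i + 1) φ x) * mergeArg i (n + 1) ψ x)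
    - (∑ j ∈ Finset.range n, (shiftArg j ψ x - shiftArg (j + 1) ψ x) * mergeArg j (m + 1) φ x)
    - shiftArg 0 φ x * shiftArg n ψ x + shiftArg m φ x * shiftArg 0 ψ x

open Finset

section ArgumentMaps

variable (g h : (ℕ → ℂ) → ℂ)

@[simp] lemma shiftArg_zero : shiftArg 0 g = g := rfl

@[simp] lemma shiftArg_shiftArg (a b : ℕ) : shiftArg a (shiftArg b g) = shiftArg (a + b) g :=
  funext fun x => congrArg g (funext fun j => congrArg x (by omega))

lemma shiftArg_add (a : ℕ) : shiftArg a (g + h) = shiftArg a g + shiftArg a h := rfl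
lemma shiftArg_sub (a : ℕ) : shiftArg a (g - h) = shiftArg a g - shiftArg a h := rfl
lemma shiftArg_mul (a : ℕ) : shiftArg a (g * h) = shiftArg a g * shiftArg a h := rfl

lemma shiftArg_sum {ι : Type*} (s : Finset ι) (G : ι → (ℕ → ℂ) → ℂ) (a : ℕ) :
    shiftArg a (∑ i ∈ s, G i) = ∑ i ∈ s, shiftArg a (G i) := by
  funext x; simp only [shiftArg, Finset.sum_apply]

lemma mergeArg_add (i L : ℕ) : mergeArg i L (g + h) = mergeArg i L g + mergeArg i L h := rfl
lemma mergeArg_sub (i L : ℕ) : mergeArg i L (g - h) = mergeArg i L g - mergeArg i L h := rfl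
lemma mergeArg_mul (i L : ℕ) : mergeArg i L (g * h) = mergeArg i L g * mergeArg i L h := rfl

lemma mergeArg_sum {ι : Type*} (s : Finset ι) (G : ι → (ℕ → ℂ) → ℂ) (i L : ℕ) :
    mergeArg i L (∑ k ∈ s, G k) = ∑ k ∈ s, mergeArg i L (G k) := by
  funext x; simp only [mergeArg, Finset.sum_apply]

variable {g}

lemma Arity.shiftArg {q : ℕ} (hg : Arity q g) (a : ℕ) : Arity (a + q) (shiftArg a g) :=
  fun _ _ h => hg _ _ fun j hj => h _ (by omega)

lemma Arity.mergeArg_eq {q c : ℕ} (hg : Arity q g) (hc : q ≤ c) (L : ℕ) : mergeArg c L g = g :=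
  funext fun _ => hg _ _ fun j hj => by simp [show j < c by omega]

variable (g)

lemma mergeArg_shiftArg_of_lt {i a : ℕ} (h : i < a) (L : ℕ) :
    mergeArg i (L + 1) (shiftArg a g) = shiftArg (a + L) g := by
  funext x
  refine congrArg g (funext fun j => ?_)
  dsimp only
  rw [if_neg (by omega), if_neg (by omega)]
  congr 1
  omega

lemma mergeArg_add_shiftArg (a c L : ℕ) :
    mergeArg (a + c) L (shiftArg a g) = shiftArg a (mergeArg c L g) := by
  funext x
  refine congrArg g (funext fun j => ?_)
  dsimp only
  split_ifs <;> first | omega | rfl | (congr 1; omega) | skip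
  exact sum_congr rfl fun t _ => congrArg x (by omega)

lemma mergeArg_mergeArg_of_le (L k : ℕ) {c L' : ℕ} (hc : c ≤ L') :
    mergeArg (k + c) (L + 1) (mergeArg k (L' + 1) g) = mergeArg k (L + L' + 1) g := by
  obtain ⟨d, rfl⟩ := Nat.exists_eq_add_of_le hc
  funext x
  refine congrArg g (funext fun j => ?_)
  dsimp only
  split_ifs <;> first | omega | rfl | (congr 1; omega) | skip
  rw [show c + d + 1 = c + 1 + d by omega, show L + (c + d) + 1 = c + (L + 1) + d by omega,
    sum_range_add _ (c + 1) d, sum_range_add _ c 1, sum_range_add _ (c + (L + 1)) d,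
    sum_range_add _ c (L + 1), sum_range_one]
  congr 1
  · congr 1
    · exact sum_congr rfl fun t ht => by rw [if_pos (by simp at ht; omega)]
    · rw [if_neg (by omega), if_pos (by omega)]
      exact sum_congr rfl fun t _ => congrArg x (by omega)
  · exact sum_congr rfl fun t _ => by rw [if_neg (by omega), if_neg (by omega)]; congr 1; omega

lemma mergeArg_mergeArg_of_lt (L L' : ℕ) {a b : ℕ} (h : a < b) :
    mergeArg a (L + 1) (mergeArg b (L' + 1) g) =
      mergeArg (b + L) (L' + 1) (mergeArg a (L + 1) g) := by
  funext x
  refine congrArg g (funext fun j => ?_)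
  dsimp only
  split_ifs <;> first | omega | rfl | (congr 1; omega) | skip
  · exact sum_congr rfl fun t ht => by rw [if_pos (by simp at ht; omega)]
  · exact sum_congr rfl fun t _ => by rw [if_neg (by omega), if_neg (by omega)]; congr 1; omega

end ArgumentMaps

def shiftDiff (i : ℕ) (φ : (ℕ → ℂ) → ℂ) : (ℕ → ℂ) → ℂ :=
  shiftArg i φ - shiftArg (i + 1) φ

noncomputable def mergeSum (n q : ℕ) (φ g : (ℕ → ℂ) → ℂ) : (ℕ → ℂ) → ℂ :=
  ∑ i ∈ range q, shiftDiff i φ * mergeArg i (n + 1) g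

lemma act_eq (n q : ℕ) (φ g : (ℕ → ℂ) → ℂ) :
    Act n q φ g = mergeSum n q φ g - φ * shiftArg n g + shiftArg q φ * g := by
  funext x
  simp [Act, mergeSum, shiftDiff, Finset.sum_apply]

lemma br0_eq (n m : ℕ) (φ ψ : (ℕ → ℂ) → ℂ) :
    Br0 n m φ ψ = mergeSum n m φ ψ - mergeSum m n ψ φ - φ * shiftArg n ψ + shiftArg m φ * ψ := by
  funext x
  simp [Br0, mergeSum, shiftDiff, Finset.sum_apply]

lemma shiftDiff_eq_shiftArg (i : ℕ) (φ : (ℕ → ℂ) → ℂ) :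
    shiftDiff i φ = shiftArg i (φ - shiftArg 1 φ) := by
  simp [shiftDiff, shiftArg_sub]

@[simp] lemma shiftArg_shiftDiff (a i : ℕ) (φ : (ℕ → ℂ) → ℂ) :
    shiftArg a (shiftDiff i φ) = shiftDiff (a + i) φ := by
  simp [shiftDiff, shiftArg_sub, add_assoc]

lemma mergeArg_shiftDiff_of_lt {i a : ℕ} (h : i < a) (L : ℕ) (φ : (ℕ → ℂ) → ℂ) :
    mergeArg i (L + 1) (shiftDiff a φ) = shiftDiff (a + L) φ := by
  rw [shiftDiff, mergeArg_sub, mergeArg_shiftArg_of_lt _ h, mergeArg_shiftArg_of_lt _ (by omega),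
    shiftDiff, add_right_comm]

section MergeSum

variable {n m q : ℕ} {φ ψ g h : (ℕ → ℂ) → ℂ}

lemma Arity.mergeArg_shiftDiff {a c : ℕ} (hφ : Arity q φ) (h : a + q < c) (L : ℕ) :
    mergeArg c L (shiftDiff a φ) = shiftDiff a φ := by
  rw [shiftDiff, mergeArg_sub, (hφ.shiftArg a).mergeArg_eq h.le,
    (hφ.shiftArg (a + 1)).mergeArg_eq (by omega)]

lemma mergeSum_add : mergeSum n q φ (g + h) = mergeSum n q φ g + mergeSum n q φ h := by
  simp only [mergeSum, mergeArg_add, mul_add, sum_add_distrib]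

lemma mergeSum_sub : mergeSum n q φ (g - h) = mergeSum n q φ g - mergeSum n q φ h := by
  simp only [mergeSum, mergeArg_sub, mul_sub, sum_sub_distrib]

lemma mergeSum_sum {ι : Type*} (s : Finset ι) (G : ι → (ℕ → ℂ) → ℂ) :
    mergeSum n q φ (∑ k ∈ s, G k) = ∑ k ∈ s, mergeSum n q φ (G k) := by
  simp only [mergeSum, mergeArg_sum, mul_sum]
  exact sum_comm

lemma mergeSum_mul_shiftArg {a : ℕ} (b : ℕ) (hg : Arity a g) :
    mergeSum n (a + b) φ (g * shiftArg a h) =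
      mergeSum n a φ g * shiftArg (a + n) h + g * shiftArg a (mergeSum n b φ h) := by
  simp only [mergeSum, sum_range_add, sum_mul, shiftArg_sum, mul_sum]
  congr 1 <;> refine sum_congr rfl fun i hi => ?_
  · rw [mergeArg_mul, mergeArg_shiftArg_of_lt _ (mem_range.1 hi)]
    ring
  · rw [mergeArg_mul, hg.mergeArg_eq (by omega), mergeArg_add_shiftArg, shiftArg_mul,
      shiftArg_shiftDiff]
    ring

lemma mergeSum_sub_shiftArg_one (hψ : Arity m ψ) :
    mergeSum n (m + 1) φ (ψ - shiftArg 1 ψ) =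
      mergeSum n m φ ψ - shiftArg 1 (mergeSum n m φ ψ)
        + shiftDiff m φ * ψ - shiftDiff 0 φ * shiftArg (n + 1) ψ := by
  have hlast : mergeSum n (m + 1) φ ψ = mergeSum n m φ ψ + shiftDiff m φ * ψ := by
    rw [mergeSum, sum_range_succ, hψ.mergeArg_eq le_rfl, mergeSum]
  have hfirst : mergeSum n (m + 1) φ (shiftArg 1 ψ) =
      shiftArg 1 (mergeSum n m φ ψ) + shiftDiff 0 φ * shiftArg (n + 1) ψ := by
    rw [mergeSum, sum_range_succ', mergeSum, shiftArg_sum,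
      mergeArg_shiftArg_of_lt _ zero_lt_one, add_comm 1 n]
    congr 1
    refine sum_congr rfl fun i _ => ?_
    rw [shiftArg_mul, shiftArg_shiftDiff, ← mergeArg_add_shiftArg, add_comm 1 i]
  rw [mergeSum_sub, hlast, hfirst]
  ring

end MergeSum

noncomputable def disjointMerges (n m p : ℕ) (φ ψ f : (ℕ → ℂ) → ℂ) : (ℕ → ℂ) → ℂ :=
  ∑ k ∈ range p, ∑ i ∈ range k,
    (shiftDiff i φ * shiftDiff (k + n) ψ * mergeArg i (n + 1) (mergeArg k (m + 1) f)
      + shiftDiff (k + m) φ * shiftDiff i ψ * mergeArg i (m + 1) (mergeArg k (n + 1) f))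

section DoubleMergeSum

variable {n m p : ℕ} {φ ψ f : (ℕ → ℂ) → ℂ}

lemma disjointMerges_comm : disjointMerges n m p φ ψ f = disjointMerges m n p ψ φ f :=
  sum_congr rfl fun _ _ => sum_congr rfl fun _ _ => by ring

lemma mergeSum_shiftDiff_mul_mergeArg (hψ : Arity m ψ) {k : ℕ} (hk : k < p) :
    mergeSum n (m + p) φ (shiftDiff k ψ * mergeArg k (m + 1) f) =
      ∑ i ∈ range k,
          shiftDiff i φ * shiftDiff (k + n) ψ * mergeArg i (n + 1) (mergeArg k (m + 1) f)
        + shiftArg k (mergeSum n (m + 1) φ (ψ - shiftArg 1 ψ)) * mergeArg k (n + m + 1) f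
        + ∑ k' ∈ Ico (k + 1) p,
          shiftDiff (k' + m) φ * shiftDiff k ψ * mergeArg k (m + 1) (mergeArg k' (n + 1) f) := by
  obtain ⟨r, rfl⟩ : ∃ r, p = k + 1 + r := ⟨p - k - 1, by omega⟩
  rw [show m + (k + 1 + r) = k + (m + 1) + r by omega, mergeSum, sum_range_add _ (k + (m + 1)) r,
    sum_range_add _ k (m + 1), sum_Ico_eq_sum_range, show k + 1 + r - (k + 1) = r by omega]
  congr 1
  congr 1
  · refine sum_congr rfl fun i hi => ?_
    rw [mergeArg_mul, mergeArg_shiftDiff_of_lt (mem_range.1 hi), mul_assoc]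
  · rw [mergeSum, shiftArg_sum, sum_mul]
    refine sum_congr rfl fun j hj => ?_
    rw [mergeArg_mul, mergeArg_mergeArg_of_le _ _ _ (by simp at hj; omega),
      shiftDiff_eq_shiftArg k ψ, mergeArg_add_shiftArg, shiftArg_mul, shiftArg_shiftDiff, mul_assoc]
  · refine sum_congr rfl fun t _ => ?_
    rw [mergeArg_mul, hψ.mergeArg_shiftDiff (by omega),
      mergeArg_mergeArg_of_lt _ _ _ (show k < k + 1 + t by omega),
      show k + 1 + t + m = k + (m + 1) + t by omega]
    ring

lemma mergeSum_mergeSum (hψ : Arity m ψ) :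
    mergeSum n (m + p) φ (mergeSum m p ψ f) =
      disjointMerges n m p φ ψ f
        + ∑ k ∈ range p,
          shiftArg k (mergeSum n (m + 1) φ (ψ - shiftArg 1 ψ)) * mergeArg k (n + m + 1) f := by
  rw [mergeSum.eq_1 m p, mergeSum_sum,
    sum_congr rfl fun k hk => mergeSum_shiftDiff_mul_mergeArg hψ (mem_range.1 hk),
    sum_add_distrib, sum_add_distrib, add_right_comm]
  simp only [disjointMerges, sum_add_distrib]
  congr 2
  exact sum_comm' fun k k' => by simp only [mem_range, mem_Ico]; omega

end DoubleMergeSum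

section Commutator

variable {n m p : ℕ} {φ ψ f : (ℕ → ℂ) → ℂ}

lemma act_act (hψ : Arity m ψ) (hf : Arity p f) :
    Act n (m + p) φ (Act m p ψ f) =
      disjointMerges n m p φ ψ f
        + ∑ k ∈ range p,
          shiftArg k (mergeSum n (m + 1) φ (ψ - shiftArg 1 ψ)) * mergeArg k (n + m + 1) f
        - mergeSum n m φ ψ * shiftArg (m + n) f - ψ * shiftArg m (mergeSum n p φ f)
        + shiftArg (p + n) ψ * mergeSum n p φ f + f * shiftArg p (mergeSum n m φ ψ)
        - φ * shiftArg n (Act m p ψ f) + shiftArg (m + p) φ * Act m p ψ f := by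
  have hψf := mergeSum_mul_shiftArg (n := n) (φ := φ) (h := f) p hψ
  have hfψ := mergeSum_mul_shiftArg (n := n) (φ := φ) (h := ψ) m hf
  rw [add_comm p m] at hfψ
  rw [act_eq n (m + p), act_eq m p ψ f, mergeSum_add, mergeSum_sub, mergeSum_mergeSum hψ, hψf,
    mul_comm (shiftArg p ψ) f, hfψ]
  ring

lemma shiftDiff_br0 (hφ : Arity n φ) (hψ : Arity m ψ) (k : ℕ) :
    shiftDiff k (Br0 n m φ ψ) =
      shiftArg k (mergeSum n (m + 1) φ (ψ - shiftArg 1 ψ)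
        - mergeSum m (n + 1) ψ (φ - shiftArg 1 φ)) := by
  rw [shiftDiff_eq_shiftArg, mergeSum_sub_shiftArg_one hψ, mergeSum_sub_shiftArg_one hφ, br0_eq]
  congr 1
  simp only [shiftArg_add, shiftArg_sub, shiftArg_mul, shiftArg_shiftArg, shiftArg_zero, shiftDiff]
  -- `ring_nf` rather than `ring`: the shift indices `1 + m` and `m + 1` must be identified too
  ring_nf

lemma act_act_sub_act_act (hφ : Arity n φ) (hψ : Arity m ψ) (hf : Arity p f) :
    Act n (m + p) φ (Act m p ψ f) - Act m (n + p) ψ (Act n p φ f) =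
      Act (n + m) p (Br0 n m φ ψ) f := by
  rw [act_act hψ hf, act_act hφ hf, disjointMerges_comm, act_eq (n + m), mergeSum.eq_1 (n + m)]
  simp only [shiftDiff_br0 hφ hψ, shiftArg_sub, sub_mul, sum_sub_distrib]
  rw [act_eq m p ψ f, act_eq n p φ f, br0_eq]
  simp only [shiftArg_add, shiftArg_sub, shiftArg_mul, shiftArg_shiftArg]
  ring_nf

end Commutator

theorem G0_module_structure_general (n m p : ℕ)
    (φ ψ f : (ℕ → ℂ) → ℂ)
    (hφa : Arity n φ) (hψa : Arity m ψ) (hfa : Arity p f) :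
    ∀ x : ℕ → ℂ,
      Act n (m + p) φ (Act m p ψ f) x - Act m (n + p) ψ (Act n p φ f) x =
        Act (n + m) p (Br0 n m φ ψ) f x :=
  congrFun (act_act_sub_act_act hφa hψa hfa)

/-- The formula `φ • f` defines a Lie module structure of the graded Lie algebra `𝒢₀`
on `F = ⊕_{m≥0} F_m`: `φ•(ψ•f) − ψ•(φ•f) = [φ,ψ]₀ • f`. -/
theorem G0_module_structure (n m p : ℕ) (hn : 1 ≤ n) (hm : 1 ≤ m)
    (φ ψ f : (ℕ → ℂ) → ℂ)
    (hφa : Arity n φ) (hψa : Arity m ψ) (hfa : Arity p f)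
    (hφc : CycInv n φ) (hψc : CycInv m ψ) :
    ∀ x : ℕ → ℂ,
      Act n (m + p) φ (Act m p ψ f) x - Act m (n + p) ψ (Act n p φ f) x =
        Act (n + m) p (Br0 n m φ ψ) f x :=
  G0_module_structure_general n m p φ ψ f hφa hψa hfa
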